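/- Let (C₁, C₂) be a CSS-T pair of binary codes of length n with C₂ ≠ {0}. Then there exists no CSS-T pair (D₁, D₂) with D₂ ≠ {0} and C₁ ⊊ D₁ if and only if for every nonzero y ∈ C₁ ∩ (C₁^{⋆2})^⊥ one has C₁⋆span{y} = C₁^⊥. -/

import Mathlib

open Finset

/-- The Euclidean dual of a binary code. -/
def dualCode {n : ℕ} (C : Submodule (ZMod 2) (Fin n → ZMod 2)) :
    Submodule (ZMod 2) (Fin n → ZMod 2) where
  carrier := {x | ∀ c ∈ C, ∑ i, x i * c i = 0}
  add_mem' := by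
    intro a b ha hb
    intro c hc
    have : ∑ i, (a + b) i * c i = ∑ i, (a i * c i + b i * c i) := by
      apply Finset.sum_congr rfl
      intro i _
      simp [add_mul]
    rw [this, Finset.sum_add_distrib, ha c hc, hb c hc, add_zero]
  zero_mem' := by
    intro c hc
    simp
  smul_mem' := by
    intro r a ha
    intro c hc
    have : ∑ i, (r • a) i * c i = r * ∑ i, a i * c i := by
      rw [Finset.mul_sum]
      apply Finset.sum_congr rfl
      intro i _
      simp [mul_assoc]
    rw [this, ha c hc, mul_zero]

/-- The (componentwise) Schur product of two binary codes. -/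
def schur {n : ℕ} (C D : Submodule (ZMod 2) (Fin n → ZMod 2)) :
    Submodule (ZMod 2) (Fin n → ZMod 2) :=
  Submodule.span (ZMod 2) {x | ∃ c ∈ C, ∃ d ∈ D, x = c * d}

/-- A pair of binary codes `(C₁, C₂)` is a CSS-T pair if `C₂ ⊆ C₁ ∩ (C₁^{⋆2})^⊥`. -/
def IsCSST {n : ℕ} (C₁ C₂ : Submodule (ZMod 2) (Fin n → ZMod 2)) : Prop :=
  C₂ ≤ C₁ ⊓ dualCode (schur C₁ C₁)

/-!
For `y ∈ (C^{⋆2})^⊥` the symmetric bilinear form `(a, b) ↦ ∑ yᵢaᵢbᵢ` vanishes on `C`, so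
`C ⋆ y ⊆ C^⊥`. If this inclusion is strict, any `v ∈ (C ⋆ y)^⊥ \ C` can be adjoined to `C` while
keeping `y` orthogonal to the Schur square, because over `𝔽₂` we have `v ⋆ v = v` and
`y ⋆ y = y ∈ C ⋆ y`; this gives the larger CSS-T pair `(C + ⟨v⟩, ⟨y⟩)`.

Conversely, assume `C₁ ⋆ y = C₁^⊥` for all admissible `y`, and let `(D₁, D₂)` be a CSS-T pair with
`C₁ < D₁` and `0 ≠ z ∈ D₂`. For `0 ≠ y ∈ C₂` we get `z ∈ (C₁ ⋆ y)^⊥ = C₁`, hence `C₁ ⋆ z = C₁^⊥`.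
Multiplication by `z` maps `D₁` into `C₁^⊥ = C₁ ⋆ z`, so every `v ∈ D₁` agrees with some `c ∈ C₁`
on the support of `z`, and this puts `v` in `(C₁ ⋆ z)^⊥ = C₁`.
-/

open Submodule

section DotProduct

variable {ι R : Type*} [Fintype ι] [CommSemiring R]

theorem mul_dotProduct (a b c : ι → R) : (a * b) ⬝ᵥ c = a ⬝ᵥ (b * c) := by
  simp only [dotProduct, Pi.mul_apply, mul_assoc]

theorem dotProduct_mul_left_comm (x a b : ι → R) : x ⬝ᵥ (a * b) = a ⬝ᵥ (x * b) := by
  simp only [dotProduct, Pi.mul_apply, mul_left_comm]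

end DotProduct

theorem isIdempotentElem_zmod_two {ι : Type*} (x : ι → ZMod 2) : IsIdempotentElem x :=
  funext fun i => by simpa [sq] using ZMod.pow_card (x i)

section BinaryCode

variable {n : ℕ} {C D : Submodule (ZMod 2) (Fin n → ZMod 2)} {x y z : Fin n → ZMod 2}

theorem mem_dualCode : x ∈ dualCode C ↔ ∀ c ∈ C, x ⬝ᵥ c = 0 := Iff.rfl

theorem dualCode_antitone (h : C ≤ D) : dualCode D ≤ dualCode C :=
  fun _ hx c hc => hx c (h hc)

theorem le_dualCode_comm : C ≤ dualCode D ↔ D ≤ dualCode C := by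
  constructor <;> exact fun h x hx c hc => (dotProduct_comm x c).trans (h hc x hx)

theorem mem_dualCode_span_singleton : x ∈ dualCode (ZMod 2 ∙ y) ↔ x ⬝ᵥ y = 0 := by
  refine ⟨fun h => h y (mem_span_singleton_self y), fun h c hc => ?_⟩
  obtain ⟨t, rfl⟩ := mem_span_singleton.1 hc
  change x ⬝ᵥ (t • y) = 0
  rw [dotProduct_smul, h, smul_zero]

theorem dualCode_eq_orthogonal (C : Submodule (ZMod 2) (Fin n → ZMod 2)) :
    dualCode C = LinearMap.BilinForm.orthogonal (dotProductBilin (ZMod 2) (ZMod 2)) C := by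
  ext x
  simp only [mem_dualCode, LinearMap.BilinForm.mem_orthogonal_iff, dotProductBilin_apply_apply,
    dotProduct_comm x]

theorem dualCode_dualCode (C : Submodule (ZMod 2) (Fin n → ZMod 2)) :
    dualCode (dualCode C) = C := by
  have hnd : (dotProductBilin (ZMod 2) (ZMod 2) :
      LinearMap.BilinForm (ZMod 2) (Fin n → ZMod 2)).Nondegenerate :=
    ⟨fun x hx => dotProduct_eq_zero x hx,
      fun x hx => dotProduct_eq_zero x fun w => (dotProduct_comm x w).trans (hx w)⟩
  rw [dualCode_eq_orthogonal, dualCode_eq_orthogonal,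
    LinearMap.BilinForm.orthogonal_orthogonal hnd fun x y h => (dotProduct_comm y x).trans h]

theorem mul_mem_schur {c d : Fin n → ZMod 2} (hc : c ∈ C) (hd : d ∈ D) : c * d ∈ schur C D :=
  subset_span ⟨c, hc, d, hd, rfl⟩

theorem schur_le_iff {E : Submodule (ZMod 2) (Fin n → ZMod 2)} :
    schur C D ≤ E ↔ ∀ c ∈ C, ∀ d ∈ D, c * d ∈ E := by
  refine ⟨fun h c hc d hd => h (mul_mem_schur hc hd), fun h => span_le.2 ?_⟩
  rintro _ ⟨c, hc, d, hd, rfl⟩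
  exact h c hc d hd

theorem schur_mono {C' D' : Submodule (ZMod 2) (Fin n → ZMod 2)} (hC : C ≤ C') (hD : D ≤ D') :
    schur C D ≤ schur C' D' :=
  schur_le_iff.2 fun _ hc _ hd => mul_mem_schur (hC hc) (hD hd)

theorem mem_dualCode_schur :
    x ∈ dualCode (schur C D) ↔ ∀ c ∈ C, ∀ d ∈ D, x ⬝ᵥ (c * d) = 0 := by
  refine ⟨fun hx c hc d hd => hx _ (mul_mem_schur hc hd), fun h => ?_⟩
  rw [← span_singleton_le_iff_mem, le_dualCode_comm, schur_le_iff]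
  intro c hc d hd
  rw [mem_dualCode_span_singleton, dotProduct_comm]
  exact h c hc d hd

theorem schur_span_singleton (C : Submodule (ZMod 2) (Fin n → ZMod 2)) (y : Fin n → ZMod 2) :
    schur C (ZMod 2 ∙ y) = C.map (LinearMap.mulRight (ZMod 2) y) := by
  refine le_antisymm (schur_le_iff.2 fun c hc d hd => ?_) ?_
  · obtain ⟨t, rfl⟩ := mem_span_singleton.1 hd
    exact ⟨t • c, C.smul_mem t hc, by simp⟩
  · rintro _ ⟨c, hc, rfl⟩
    exact mul_mem_schur hc (mem_span_singleton_self y)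

theorem schur_span_singleton_le_dualCode (hy : y ∈ dualCode (schur C C)) :
    schur C (ZMod 2 ∙ y) ≤ dualCode C := by
  rw [schur_span_singleton]
  rintro _ ⟨c, hc, rfl⟩ c' hc'
  change (c * y) ⬝ᵥ c' = 0
  rw [mul_comm, mul_dotProduct]
  exact hy _ (mul_mem_schur hc hc')

theorem mem_dualCode_schur_sup_span_singleton {v : Fin n → ZMod 2}
    (hC : y ∈ dualCode (schur C C)) (hCv : ∀ c ∈ C, y ⬝ᵥ (c * v) = 0) (hvv : y ⬝ᵥ (v * v) = 0) :
    y ∈ dualCode (schur (C ⊔ ZMod 2 ∙ v) (C ⊔ ZMod 2 ∙ v)) := by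
  rw [mem_dualCode_schur] at hC ⊢
  rintro _ ha _ hb
  obtain ⟨c, hc, _, hs, rfl⟩ := mem_sup.1 ha
  obtain ⟨t, rfl⟩ := mem_span_singleton.1 hs
  obtain ⟨c', hc', _, hs', rfl⟩ := mem_sup.1 hb
  obtain ⟨u, rfl⟩ := mem_span_singleton.1 hs'
  have hvc' : y ⬝ᵥ (v * c') = 0 := mul_comm c' v ▸ hCv c' hc'
  simp [add_mul, mul_add, dotProduct_add, dotProduct_smul,
    hC c hc c' hc', hCv c hc, hvc', hvv]

theorem isCSST_sup_span_singleton {v : Fin n → ZMod 2} (hy : y ∈ C ⊓ dualCode (schur C C))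
    (hv : v ∈ dualCode (schur C (ZMod 2 ∙ y))) : IsCSST (C ⊔ ZMod 2 ∙ v) (ZMod 2 ∙ y) := by
  have hvy : ∀ c ∈ C, v ⬝ᵥ (c * y) = 0 := fun c hc =>
    hv _ (mul_mem_schur hc (mem_span_singleton_self y))
  rw [IsCSST, span_singleton_le_iff_mem]
  refine ⟨mem_sup_left hy.1, mem_dualCode_schur_sup_span_singleton hy.2 (fun c hc => ?_) ?_⟩
  · rw [mul_comm, dotProduct_mul_left_comm, mul_comm]
    exact hvy c hc
  · rw [(isIdempotentElem_zmod_two v).eq, dotProduct_comm, ← (isIdempotentElem_zmod_two y).eq]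
    exact hvy y hy.1

theorem exists_isCSST_of_schur_span_singleton_ne (hy : y ∈ C ⊓ dualCode (schur C C))
    (hne : schur C (ZMod 2 ∙ y) ≠ dualCode C) : ∃ D, C < D ∧ IsCSST D (ZMod 2 ∙ y) := by
  have hle : C ≤ dualCode (schur C (ZMod 2 ∙ y)) :=
    le_dualCode_comm.1 (schur_span_singleton_le_dualCode hy.2)
  obtain ⟨v, hv, hvC⟩ := SetLike.exists_of_lt <| hle.lt_of_ne fun h =>
    hne <| (dualCode_dualCode _).symm.trans (congrArg dualCode h.symm)
  exact ⟨C ⊔ ZMod 2 ∙ v, left_lt_sup.2 (by rwa [span_singleton_le_iff_mem]),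
    isCSST_sup_span_singleton hy hv⟩

theorem mem_of_schur_span_singleton_eq_dualCode (hCD : C ≤ D) (hy : y ∈ D)
    (hz : z ∈ dualCode (schur D D)) (hCy : schur C (ZMod 2 ∙ y) = dualCode C) : z ∈ C := by
  rw [← dualCode_dualCode C, ← hCy]
  exact dualCode_antitone (schur_mono hCD ((span_singleton_le_iff_mem _ _).2 hy)) hz

theorem le_of_schur_span_singleton_eq_dualCode (hCD : C ≤ D) (hz : z ∈ dualCode (schur D D))
    (hCz : schur C (ZMod 2 ∙ z) = dualCode C) : D ≤ C := by
  intro v hv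
  have hvz : v * z ∈ dualCode C := fun c hc => by
    change (v * z) ⬝ᵥ c = 0
    rw [mul_comm, mul_dotProduct]
    exact hz _ (mul_mem_schur hv (hCD hc))
  rw [← hCz, schur_span_singleton] at hvz
  obtain ⟨c, hc, hcz⟩ := hvz
  rw [← dualCode_dualCode C, ← hCz, schur_span_singleton]
  rintro _ ⟨c', hc', rfl⟩
  calc v ⬝ᵥ (c' * z) = c' ⬝ᵥ (c * z) := by rw [dotProduct_mul_left_comm, ← hcz]; rfl
    _ = z ⬝ᵥ (c' * c) := by rw [dotProduct_mul_left_comm z, mul_comm z]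
    _ = 0 := hz _ (mul_mem_schur (hCD hc') (hCD hc))

end BinaryCode

theorem stmt_15 (n : ℕ) (C₁ C₂ : Submodule (ZMod 2) (Fin n → ZMod 2))
    (h : IsCSST C₁ C₂) (h₂ : C₂ ≠ ⊥) :
    (¬ ∃ D₁ D₂ : Submodule (ZMod 2) (Fin n → ZMod 2),
        IsCSST D₁ D₂ ∧ D₂ ≠ ⊥ ∧ C₁ < D₁)
    ↔ ∀ y ∈ C₁ ⊓ dualCode (schur C₁ C₁), y ≠ 0 →
        schur C₁ (Submodule.span (ZMod 2) {y}) = dualCode C₁ := by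
  constructor
  · intro hmax y hy hy0
    by_contra hne
    obtain ⟨D, hCD, hD⟩ := exists_isCSST_of_schur_span_singleton_ne hy hne
    exact hmax ⟨D, _, hD, span_singleton_eq_bot.not.2 hy0, hCD⟩
  · rintro H ⟨D₁, D₂, hD, hD₂, hCD⟩
    obtain ⟨y, hyC₂, hy0⟩ := exists_mem_ne_zero_of_ne_bot h₂
    obtain ⟨z, hzD₂, hz0⟩ := exists_mem_ne_zero_of_ne_bot hD₂
    have hy := h hyC₂
    have hzD := hD hzD₂
    have hz : z ∈ C₁ ⊓ dualCode (schur C₁ C₁) :=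
      ⟨mem_of_schur_span_singleton_eq_dualCode hCD.le (hCD.le hy.1) hzD.2 (H y hy hy0),
        dualCode_antitone (schur_mono hCD.le hCD.le) hzD.2⟩
    exact hCD.not_ge (le_of_schur_span_singleton_eq_dualCode hCD.le hzD.2 (H z hz hz0))
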